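/- Let B(n) denote the number of partitions of an n-element set (the Bell numbers: B(0)=1, B(1)=1, B(2)=2, B(3)=5, B(4)=15, B(5)=52, …). Then, as formal power series over ℚ, ∑_{n≥0} B(n)·X^n/n! = exp(exp(X) − 1), where the right-hand side is the composition of the exponential power series with the zero-constant-term series exp(X) − 1. -/

import Mathlib

/-!
Removing the block of one point from a partition of an `(n+1)`-element set leaves a partition of
the complement of that block, so the partition counts satisfy
`B(n+1) = ∑ₖ C(n,k) B(n-k)`, the recurrence defining `Nat.bell`. Hence the exponential
generating function `f` of the Bell numbers solves `f' = exp · f` with `f(0) = 1`. By the chain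
rule `exp(exp X - 1)` solves the same linear equation, and a solution of `f' = h f` is determined by
its constant term.
-/

/-- Composition `g ∘ T` of formal power series over `ℚ`, valid (equal to the usual
substitution) when `T` has zero constant term: the `k`-th coefficient is
`∑_{n ≤ k} (coeff n g) · (coeff k (T^n))`. -/
noncomputable def PowerSeries.comp (g T : PowerSeries ℚ) : PowerSeries ℚ :=
  PowerSeries.mk fun k =>
    ∑ n ∈ Finset.range (k + 1), PowerSeries.coeff n g * PowerSeries.coeff k (T ^ n)

namespace Setoid

variable {α β : Type*}

instance [Finite α] : Finite (Setoid α) :=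
  Finite.of_injective (fun r : Setoid α => ⇑r) fun _ _ h =>
    Setoid.ext fun a b => iff_of_eq (congrFun₂ h a b)

def congr (e : α ≃ β) : Setoid α ≃ Setoid β where
  toFun r := r.comap e.symm
  invFun r := r.comap e
  left_inv r := Setoid.ext fun a b => by simp [comap_rel]
  right_inv r := Setoid.ext fun a b => by simp [comap_rel]

def blockOfNone (r : Setoid (Option α)) : Set α := {a | r (some a) none}

open Classical in
/-- The setoid on `Option α` whose class of `none` is `insert none (some '' s)` and which agrees
with `r` on `sᶜ`. -/
noncomputable def optionOfBlock (s : Set α) (r : Setoid ↥sᶜ) : Setoid (Option α) :=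
  ker fun x : Option α => x.bind fun a => if h : a ∈ s then none else some (Quotient.mk r ⟨a, h⟩)

section optionOfBlock

variable {s : Set α} (r : Setoid ↥sᶜ)

theorem optionOfBlock_some_none {a : α} : optionOfBlock s r (some a) none ↔ a ∈ s := by
  rw [optionOfBlock, ker_def]
  by_cases ha : a ∈ s <;> simp [ha]

theorem optionOfBlock_some_some_of_mem {a : α} (ha : a ∈ s) (b : α) :
    optionOfBlock s r (some a) (some b) ↔ b ∈ s := by
  rw [optionOfBlock, ker_def]
  by_cases hb : b ∈ s <;> simp [ha, hb]

theorem optionOfBlock_some_some {a b : α} (ha : a ∉ s) (hb : b ∉ s) :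
    optionOfBlock s r (some a) (some b) ↔ r ⟨a, ha⟩ ⟨b, hb⟩ := by
  rw [optionOfBlock, ker_def]
  simp [ha, hb, Quotient.eq]

theorem blockOfNone_optionOfBlock : blockOfNone (optionOfBlock s r) = s :=
  Set.ext fun _ => optionOfBlock_some_none r

end optionOfBlock

theorem optionOfBlock_blockOfNone (r : Setoid (Option α)) :
    optionOfBlock r.blockOfNone (r.comap fun a => some a.1) = r := by
  ext x y
  match x, y with
  | none, none => exact iff_of_true ((optionOfBlock _ _).refl' _) (r.refl' _)
  | some a, none => exact optionOfBlock_some_none _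
  | none, some b => rw [(optionOfBlock _ _).comm', r.comm']; exact optionOfBlock_some_none _
  | some a, some b =>
    by_cases ha : a ∈ r.blockOfNone
    · rw [optionOfBlock_some_some_of_mem _ ha]
      exact ⟨fun hb => r.trans' ha (r.symm' hb), fun hab => r.trans' (r.symm' hab) ha⟩
    by_cases hb : b ∈ r.blockOfNone
    · rw [(optionOfBlock _ _).comm', optionOfBlock_some_some_of_mem _ hb]
      exact iff_of_false ha fun hab => ha (r.trans' hab hb)
    exact optionOfBlock_some_some _ ha hb

noncomputable def optionFiberEquiv (s : Set α) :
    {r : Setoid (Option α) // r.blockOfNone = s} ≃ Setoid ↥sᶜ where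
  toFun r := r.1.comap fun a => some a.1
  invFun r := ⟨optionOfBlock s r, blockOfNone_optionOfBlock r⟩
  left_inv := by
    rintro ⟨r, rfl⟩
    exact Subtype.ext (optionOfBlock_blockOfNone r)
  right_inv r := Setoid.ext fun a b => by
    rw [comap_rel, optionOfBlock_some_some r a.2 b.2]

theorem natCard_option_eq_sum [Fintype α] [DecidableEq α] :
    Nat.card (Setoid (Option α)) = ∑ s : Set α, Nat.card (Setoid ↥sᶜ) := by
  rw [← Nat.card_congr (Equiv.sigmaFiberEquiv blockOfNone), Nat.card_sigma]
  exact Finset.sum_congr rfl fun s _ => Nat.card_congr (optionFiberEquiv s)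

end Setoid

open Finset in
theorem Fintype.sum_set_apply_natCard_compl {β M : Type*} [Fintype β] [DecidableEq β]
    [AddCommMonoid M] (f : ℕ → M) :
    ∑ s : Set β, f (Nat.card ↥sᶜ) =
      ∑ m ∈ range (card β + 1), (card β).choose m • f (card β - m) := by
  classical
  rw [← card_univ, ← sum_powerset_apply_card (fun m => f (#univ - m)), powerset_univ]
  refine Fintype.sum_equiv Fintype.finsetEquivSet.symm _ _ fun s => ?_
  congr 1
  rw [Nat.card_eq_fintype_card, Fintype.card_compl_set]
  simp

theorem Setoid.natCard_eq_bell (α : Type*) [Finite α] :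
    Nat.card (Setoid α) = (Nat.card α).bell := by
  suffices ∀ n (α : Type _) [Finite α], Nat.card α = n → Nat.card (Setoid α) = n.bell from
    this _ α rfl
  intro n
  induction n using Nat.strong_induction_on with
  | _ n ih =>
    intro α _ hα
    cases n with
    | zero =>
      have : IsEmpty α := Finite.card_eq_zero_iff.mp hα
      rw [Nat.bell_zero, Nat.card_eq_one_iff_unique]
      exact ⟨⟨fun r s => Setoid.ext fun a => isEmptyElim a⟩, ⟨⊥⟩⟩
    | succ k =>
      obtain ⟨a⟩ : Nonempty α := Finite.card_pos_iff.mp (by omega)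
      classical
      have := Fintype.ofFinite α
      set β := {b // b ≠ a}
      have hβ : Fintype.card β = k := by
        rw [Fintype.card_subtype_compl, Fintype.card_subtype_eq, ← Nat.card_eq_fintype_card, hα,
          Nat.add_sub_cancel]
      calc Nat.card (Setoid α) = Nat.card (Setoid (Option β)) :=
            Nat.card_congr (congr (Equiv.optionSubtypeNe a)).symm
        _ = ∑ s : Set β, Nat.card (Setoid ↥sᶜ) := natCard_option_eq_sum
        _ = ∑ s : Set β, (Nat.card ↥sᶜ).bell := Finset.sum_congr rfl fun s _ =>
            ih _ ((Finite.card_subtype_le _).trans_lt (by simp [← hβ])) _ rfl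
        _ = (k + 1).bell := by
            rw [Fintype.sum_set_apply_natCard_compl, hβ, Nat.bell_succ, ← Nat.range_succ_eq_Iic]
            simp only [smul_eq_mul]

namespace PowerSeries

open Finset Nat

theorem coeff_pow_eq_zero_of_lt {R : Type*} [CommSemiring R] {T : R⟦X⟧}
    (hT : constantCoeff T = 0) {k n : ℕ} (h : k < n) : coeff k (T ^ n) = 0 :=
  X_pow_dvd_iff.mp (pow_dvd_pow_of_dvd (X_dvd_iff.mpr hT) n) k h

theorem comp_eq_subst {g T : ℚ⟦X⟧} (hT : constantCoeff T = 0) : comp g T = g.subst T := by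
  ext k
  rw [comp, coeff_mk, coeff_subst' (HasSubst.of_constantCoeff_zero' hT),
    finsum_eq_sum_of_support_subset _ (s := range (k + 1))]
  · rfl
  · intro n hn
    by_contra hk
    rw [coe_range, Set.mem_Iio, not_lt] at hk
    simp [coeff_pow_eq_zero_of_lt hT (Nat.lt_of_succ_le hk)] at hn

theorem eq_of_derivative_eq_mul {R : Type*} [CommRing R] [IsAddTorsionFree R] {f g h : R⟦X⟧}
    (hf : d⁄dX R f = h * f) (hg : d⁄dX R g = h * g) (h0 : constantCoeff f = constantCoeff g) :
    f = g := by
  rw [← sub_eq_zero]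
  set e := f - g with he
  have hd : d⁄dX R e = h * e := by rw [he, map_sub, hf, hg, mul_sub]
  suffices ∀ n, coeff n e = 0 by ext n; simpa using this n
  intro n
  induction n using Nat.strong_induction_on with
  | _ n ih =>
    cases n with
    | zero => simp [he, h0]
    | succ n =>
      have hn := congrArg (coeff n) hd
      rw [coeff_derivative, coeff_mul, sum_eq_zero fun ij hij => by
        rw [ih ij.2 (Nat.lt_succ_of_le (HasAntidiagonal.antidiagonal.snd_le hij)), mul_zero]] at hn
      rw [← Nat.cast_succ, mul_comm, ← nsmul_eq_mul] at hn
      exact (smul_eq_zero.mp hn).resolve_left n.succ_ne_zero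

theorem derivative_exp_subst_exp_sub_one (A : Type*) [CommRing A] [Algebra ℚ A] :
    d⁄dX A ((exp A).subst (exp A - 1)) = exp A * (exp A).subst (exp A - 1) := by
  rw [derivative_subst (HasSubst.of_constantCoeff_zero' (by simp)), derivative_exp, map_sub,
    derivative_exp, Derivation.map_one_eq_zero, sub_zero, mul_comm]

theorem constantCoeff_exp_subst_exp_sub_one (A : Type*) [CommRing A] [Algebra ℚ A] :
    constantCoeff ((exp A).subst (exp A - 1)) = 1 := by
  have hT : constantCoeff (exp A - 1) = 0 := by simp
  rw [← coeff_zero_eq_constantCoeff_apply, coeff_subst' (HasSubst.of_constantCoeff_zero' hT),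
    finsum_eq_single _ 0 fun n hn => by simp [coeff_pow_eq_zero_of_lt hT (Nat.pos_of_ne_zero hn)]]
  simp

theorem derivative_mk_bell :
    d⁄dX ℚ (mk fun n => (n.bell : ℚ) / n !) = exp ℚ * mk fun n => (n.bell : ℚ) / n ! := by
  ext n
  rw [coeff_derivative, coeff_mul, coeff_mk, bell_succ', Nat.cast_sum, sum_div, sum_mul]
  refine sum_congr rfl fun ⟨i, j⟩ hij => ?_
  obtain rfl : i + j = n := HasAntidiagonal.mem_antidiagonal.mp hij
  simp only [coeff_exp, coeff_mk, factorial_succ, Nat.cast_mul, Nat.cast_add_choose,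
    Algebra.algebraMap_self, RingHom.id_apply]
  push_cast
  field_simp

theorem mk_bell_div_factorial_eq_exp_subst :
    (mk fun n => (n.bell : ℚ) / n !) = (exp ℚ).subst (exp ℚ - 1) :=
  eq_of_derivative_eq_mul derivative_mk_bell (derivative_exp_subst_exp_sub_one ℚ)
    (by simp [constantCoeff_exp_subst_exp_sub_one ℚ])

end PowerSeries

theorem Setoid.natCard_isPartition_eq_bell (α : Type*) [Finite α] :
    Nat.card {P : Set (Set α) // Setoid.IsPartition P} = (Nat.card α).bell := by
  rw [← Setoid.natCard_eq_bell, Nat.card_congr (Setoid.Partition.orderIso α).toEquiv]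
  rfl

/-- The exponential generating function of the Bell numbers (numbers of partitions of an
`n`-element set) is `exp(exp(X) - 1)`. -/
theorem stmt7 (B : ℕ → ℕ)
    (hB : ∀ n : ℕ, B n = Nat.card {P : Set (Set (Fin n)) // Setoid.IsPartition P}) :
    (PowerSeries.mk fun n => (B n : ℚ) / (n.factorial : ℚ)) =
      PowerSeries.comp (PowerSeries.exp ℚ) (PowerSeries.exp ℚ - 1) := by
  have hB_bell : B = Nat.bell := funext fun n => by
    rw [hB, Setoid.natCard_isPartition_eq_bell, Nat.card_fin]
  rw [hB_bell, PowerSeries.comp_eq_subst (by simp)]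
  exact PowerSeries.mk_bell_div_factorial_eq_exp_subst
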